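/- Let m ≥ 1, d ≥ 0, p ≥ 0, t ≥ 1 be integers, let h_0, …, h_d be integers (with the convention h_j = 0 for j < 0 or j > d), let β_0, …, β_p be integers, and assume the identity (1−z)^m · (Σ_{j=0}^{d} h_j z^j) = 1 + Σ_{i=0}^{p} (−1)^{i+1} β_i z^{t+i} holds in ℤ[z]. If moreover β_i ≥ C(p,i) for every 0 ≤ i ≤ p, then Σ_{ℓ=0}^{t+i} (−1)^{ℓ+i+1} C(m,ℓ) h_{t+i−ℓ} ≥ C(p,i) for every 0 ≤ i ≤ p. (This is Corollary 3.6: the h-vector of a simplicial complex whose Stanley–Reisner ring has a t-linear free resolution of projective dimension p satisfies these binomial inequalities.) -/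

import Mathlib

/-!
Comparing coefficients of `X ^ (t + i)` in the identity shows that the alternating sum equals `β i`
(the constant term `1` does not interfere since `t ≥ 1`), so the inequality is the hypothesis on `β`.
-/

open Polynomial Finset

namespace Polynomial

variable {R : Type*}

theorem coeff_sum_range_C_mul_X_pow [Semiring R] (b : ℕ → R) (n k : ℕ) :
    (∑ j ∈ range n, C (b j) * X ^ j).coeff k = if k < n then b k else 0 := by
  simp only [finsetSum_coeff, coeff_C_mul_X_pow, sum_ite_eq, mem_range]

theorem coeff_sum_range_C_mul_X_pow_add [Semiring R] (b : ℕ → R) {n i : ℕ} (hi : i < n)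
    (t : ℕ) : (∑ j ∈ range n, C (b j) * X ^ (t + j)).coeff (t + i) = b i := by
  have hshift : ∑ j ∈ range n, C (b j) * X ^ (t + j) = X ^ t * ∑ j ∈ range n, C (b j) * X ^ j := by
    rw [mul_sum]
    exact sum_congr rfl fun j _ => by rw [pow_add, ← mul_assoc, ← X_pow_mul (p := C (b j)), mul_assoc]
  rw [hshift, add_comm t, coeff_X_pow_mul, coeff_sum_range_C_mul_X_pow, if_pos hi]

theorem one_sub_X_pow_eq_sum [CommRing R] (m : ℕ) :
    (1 - X : R[X]) ^ m = ∑ k ∈ range (m + 1), C ((-1 : R) ^ k * m.choose k) * X ^ k := by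
  rw [sub_eq_neg_add, add_pow]
  refine sum_congr rfl fun k _ => ?_
  rw [neg_pow, one_pow, mul_one, C_mul, C_pow, C_neg, C_1, map_natCast]
  ring

theorem coeff_one_sub_X_pow [CommRing R] (m k : ℕ) :
    ((1 - X : R[X]) ^ m).coeff k = (-1) ^ k * m.choose k := by
  rw [one_sub_X_pow_eq_sum, coeff_sum_range_C_mul_X_pow]
  split_ifs with hk
  · rfl
  · rw [Nat.choose_eq_zero_of_lt (by omega), Nat.cast_zero, mul_zero]

theorem coeff_one_sub_X_pow_mul [CommRing R] (m n : ℕ) (q : R[X]) :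
    ((1 - X) ^ m * q).coeff n =
      ∑ ℓ ∈ range (n + 1), (-1) ^ ℓ * m.choose ℓ * q.coeff (n - ℓ) := by
  rw [coeff_mul, Nat.sum_antidiagonal_eq_sum_range_succ_mk]
  simp only [coeff_one_sub_X_pow]

end Polynomial

theorem linear_resolution_h_vector_inequalities_general (m d p t : ℕ) (ht : 1 ≤ t)
    (h : ℕ → ℤ) (hh : ∀ j, d < j → h j = 0)
    (β : ℕ → ℤ)
    (hid : (1 - X : ℤ[X]) ^ m * ∑ j ∈ range (d + 1), C (h j) * X ^ j
      = 1 + ∑ i ∈ range (p + 1), (-1) ^ (i + 1) * C (β i) * X ^ (t + i))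
    (hβ : ∀ i ≤ p, (p.choose i : ℤ) ≤ β i) :
    ∀ i ≤ p, (p.choose i : ℤ) ≤ ∑ ℓ ∈ range (t + i + 1),
      (-1) ^ (ℓ + i + 1) * (m.choose ℓ : ℤ) * h (t + i - ℓ) := by
  intro i hi
  have hcoeff_h (k : ℕ) : (∑ j ∈ range (d + 1), C (h j) * X ^ j).coeff k = h k := by
    rw [coeff_sum_range_C_mul_X_pow]
    split_ifs with hk
    · rfl
    · exact (hh k (by omega)).symm
  have hsign (j : ℕ) : (-1 : ℤ[X]) ^ (j + 1) * C (β j) = C ((-1) ^ (j + 1) * β j) := by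
    rw [C_mul, C_pow, C_neg, C_1]
  have hcoeff := congrArg (coeff · (t + i)) hid
  simp only [coeff_one_sub_X_pow_mul, hcoeff_h, coeff_add, coeff_one, hsign,
    coeff_sum_range_C_mul_X_pow_add _ (Nat.lt_succ_of_le hi)] at hcoeff
  rw [if_neg (by omega), zero_add] at hcoeff
  calc (p.choose i : ℤ) ≤ β i := hβ i hi
    _ = (-1) ^ (i + 1) * ((-1) ^ (i + 1) * β i) := by rw [← mul_assoc, ← mul_pow]; simp
    _ = _ := by
      rw [← hcoeff, mul_sum]
      exact sum_congr rfl fun ℓ _ => by ring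

/-- Corollary 3.6: binomial inequalities for the h-vector of a t-linear resolution. -/
theorem linear_resolution_h_vector_inequalities (m d p t : ℕ) (hm : 1 ≤ m) (ht : 1 ≤ t)
    (h : ℕ → ℤ) (hh : ∀ j, d < j → h j = 0)
    (β : ℕ → ℤ)
    (hid : (1 - X : ℤ[X]) ^ m * ∑ j ∈ range (d + 1), C (h j) * X ^ j
      = 1 + ∑ i ∈ range (p + 1), (-1) ^ (i + 1) * C (β i) * X ^ (t + i))
    (hβ : ∀ i ≤ p, (p.choose i : ℤ) ≤ β i) :
    ∀ i ≤ p, (p.choose i : ℤ) ≤ ∑ ℓ ∈ range (t + i + 1),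
      (-1) ^ (ℓ + i + 1) * (m.choose ℓ : ℤ) * h (t + i - ℓ) :=
  linear_resolution_h_vector_inequalities_general m d p t ht h hh β hid hβ
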